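/- Every FIR-solvable WLC game is both NL-solvable and SW-solvable. -/
import Mathlib


open Classical

/-- An `n`-player win-lose coordination (WLC) game: a finite domain of choices,
nonempty pairwise disjoint choice sets `C i` for the players, and a winning
relation `W` consisting of choice profiles. -/
structure WLC (n : ℕ) where
  A : Type
  finA : Finite A
  C : Fin n → Set A
  C_nonempty : ∀ i, (C i).Nonempty
  C_disjoint : ∀ i j, i ≠ j → Disjoint (C i) (C j)
  W : Set (Fin n → A)
  W_sub : ∀ σ ∈ W, ∀ i, σ i ∈ C i

namespace WLC

variable {n : ℕ}

/-- `σ` is a choice profile w.r.t. the choice sets `Cs`. -/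
def IsProfileOn {A : Type} (Cs : Fin n → Set A) (σ : Fin n → A) : Prop :=
  ∀ i, σ i ∈ Cs i

/-- `c` is a surely winning choice of player `i` w.r.t. choice sets `Cs`
and winning relation `W`. -/
def SWinOn {A : Type} (Cs : Fin n → Set A) (W : Set (Fin n → A)) (i : Fin n) (c : A) : Prop :=
  c ∈ Cs i ∧ ∀ σ, IsProfileOn Cs σ → σ i = c → σ ∈ W

/-- `c` is a surely losing choice of player `i` w.r.t. choice sets `Cs`
and winning relation `W`. -/
def SLoseOn {A : Type} (Cs : Fin n → Set A) (W : Set (Fin n → A)) (i : Fin n) (c : A) : Prop :=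
  c ∈ Cs i ∧ ∀ σ, IsProfileOn Cs σ → σ i = c → σ ∉ W

def IsProfile (G : WLC n) (σ : Fin n → G.A) : Prop := IsProfileOn G.C σ

def SurelyWinning (G : WLC n) (i : Fin n) (c : G.A) : Prop := SWinOn G.C G.W i c

def SurelyLosing (G : WLC n) (i : Fin n) (c : G.A) : Prop := SLoseOn G.C G.W i c

/-- The winning extension of the choice `c` of player `i`: the (sets of) tuples of
choices of the other players that complete `c` to a winning profile.  (Technically we
use full profiles whose `i`-th coordinate is irrelevant, replacing it by `c`.) -/
def winExtOn {A : Type} (Cs : Fin n → Set A) (W : Set (Fin n → A)) (i : Fin n) (c : A) :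
    Set (Fin n → A) :=
  {σ | (∀ j, j ≠ i → σ j ∈ Cs j) ∧ Function.update σ i c ∈ W}

def winExt (G : WLC n) (i : Fin n) (c : G.A) : Set (Fin n → G.A) := winExtOn G.C G.W i c

end WLC

namespace WLC

variable {n : ℕ}

/-- The choices the NL principle (never play a surely losing choice, if possible)
allows for player `i`. -/
noncomputable def NLset (G : WLC n) (i : Fin n) : Set G.A :=
  if ∃ c ∈ G.C i, ¬ SurelyLosing G i c then {c ∈ G.C i | ¬ SurelyLosing G i c} else G.C i

/-- The choices the SW principle (play a surely winning choice, if possible)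
allows for player `i`. -/
noncomputable def SWset (G : WLC n) (i : Fin n) : Set G.A :=
  if ∃ c, SurelyWinning G i c then {c | SurelyWinning G i c} else G.C i

/-- The choices the BIR principle (= NL ∩ SW) allows for player `i`: a surely winning
choice if one exists, otherwise a non-surely-losing choice if one exists. -/
noncomputable def BIRset (G : WLC n) (i : Fin n) : Set G.A :=
  if ∃ c, SurelyWinning G i c then {c | SurelyWinning G i c}
  else if ∃ c ∈ G.C i, ¬ SurelyLosing G i c then {c ∈ G.C i | ¬ SurelyLosing G i c}
  else G.C i

noncomputable def NLSolvable (G : WLC n) : Prop :=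
  ∀ σ, (∀ i, σ i ∈ NLset G i) → σ ∈ G.W

noncomputable def SWSolvable (G : WLC n) : Prop :=
  ∀ σ, (∀ i, σ i ∈ SWset G i) → σ ∈ G.W

noncomputable def BIRSolvable (G : WLC n) : Prop :=
  ∀ σ, (∀ i, σ i ∈ BIRset G i) → σ ∈ G.W

end WLC

namespace WLC

/-- Choice `a` of player `i` is strictly dominated: `a` is surely losing while some
choice `b` of `i` is surely winning. -/
def StrictlyDominated {n : ℕ} (G : WLC n) (i : Fin n) (a : G.A) : Prop :=
  a ∈ G.C i ∧ SurelyLosing G i a ∧ ∃ b ∈ G.C i, SurelyWinning G i b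

/-- The choices the FIR principle (never play a strictly dominated choice) allows. -/
def FIRset {n : ℕ} (G : WLC n) (i : Fin n) : Set G.A :=
  {c ∈ G.C i | ¬ StrictlyDominated G i c}

def FIRSolvable {n : ℕ} (G : WLC n) : Prop :=
  ∀ σ, (∀ i, σ i ∈ FIRset G i) → σ ∈ G.W

end WLC

open WLC

lemma exists_profile_through {n : ℕ} (G : WLC n) (i : Fin n) (c : G.A) (hc : c ∈ G.C i) :
    ∃ σ, IsProfile G σ ∧ σ i = c := by
  refine ⟨Function.update (fun j => (G.C_nonempty j).choose) i c, ?_, ?_⟩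
  · intro j
    by_cases h : j = i
    · subst h; simp [hc]
    · simp [Function.update_of_ne h]
      exact (G.C_nonempty j).choose_spec
  · simp

lemma not_win_and_lose {n : ℕ} (G : WLC n) (i : Fin n) (c : G.A)
    (hw : SurelyWinning G i c) : ¬ SurelyLosing G i c := by
  intro hl
  obtain ⟨σ, hσ, hσi⟩ := exists_profile_through G i c hw.1
  exact hl.2 σ hσ hσi (hw.2 σ hσ hσi)

/-- Every FIR-solvable WLC game is both NL-solvable and SW-solvable. -/
theorem fir_solvable_imp_nl_and_sw {n : ℕ} (G : WLC n) :
    FIRSolvable G → NLSolvable G ∧ SWSolvable G := by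
  intro hFIR
  constructor
  · intro σ hσ
    apply hFIR
    intro i
    have h := hσ i
    unfold NLset at h
    split_ifs at h with hex
    · exact ⟨h.1, fun hd => h.2 hd.2.1⟩
    · refine ⟨h, fun hd => ?_⟩
      obtain ⟨b, hb, hwb⟩ := hd.2.2
      push_neg at hex
      exact not_win_and_lose G i b hwb ⟨hb, (hex b hb).2⟩
  · intro σ hσ
    apply hFIR
    intro i
    have h := hσ i
    unfold SWset at h
    split_ifs at h with hex
    · exact ⟨h.1, fun hd => not_win_and_lose G i (σ i) h hd.2.1⟩
    · exact ⟨h, fun hd => hex ⟨hd.2.2.choose, hd.2.2.choose_spec.2⟩⟩
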